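/- Let n ∈ ℕ and let x ∈ ℝ with x > 0, x not an integer, and ⌊x⌋ + n even. With α = x − ⌊x⌋, one has (1/(1+α))·D_n(⌊x⌋) + (α/(1+α))·D_n(x+1) − (1/2)·D_n(x−1) − (1/2)·D_n(x+1) ≥ 0. -/

import Mathlib

open Classical in
/-- The recursively defined functions `D n : ℝ → ℝ`. -/
noncomputable def D : ℕ → ℝ → ℝ
  | 0, x => if x ≤ 0 then 1 else 0
  | n + 1, x =>
    if x ≤ 0 then 1
    else if ((n : ℝ) + 1) < x then 0
    else if ∃ m : ℤ, x = (m : ℝ) then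
      (1 / 2) * D n (x - 1) + (1 / 2) * D n (x + 1)
    else if Odd n ∧ x < 1 then
      (1 - x) * D n 0 + x * D n 1
    else if Even (⌊x⌋ + (n : ℤ)) then
      (1 / (1 + Int.fract x)) * D n (⌊x⌋ : ℝ)
        + (Int.fract x / (1 + Int.fract x)) * D n (x + 1)
    else
      ((1 - Int.fract x) / (2 - Int.fract x)) * D n (x - 1)
        + (1 / (2 - Int.fract x)) * D n (⌈x⌉ : ℝ)

/-!
Multiplying by `1 + α`, the claim becomes
`(1 + α)/2 · D_n(x - 1) + (1 - α)/2 · D_n(x + 1) ≤ D_n(⌊x⌋)`.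
For `⌊x⌋ = 0` this holds because `D_n ≤ 1` and `D_n = 1` on `(-∞, 0]`.
For `⌊x⌋ ≥ 1` we induct on `n`: the three values of `D_{n+1}` involved are given by the integer
branch and the even-parity branch of the recursion (which stay valid beyond `n + 1`, where
everything vanishes), and after expanding them the inequality for `D_{n+1}` at `x` is a positive
multiple of the one for `D_n` at `x + 1`.
-/

theorem D_of_nonpos {n : ℕ} {x : ℝ} (hx : x ≤ 0) : D n x = 1 := by
  cases n <;> simp [D, hx]

theorem D_of_lt {n : ℕ} {x : ℝ} (hx : (n : ℝ) < x) : D n x = 0 := by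
  cases n with
  | zero => simp [D, not_le.2 (by simpa using hx)]
  | succ m =>
    have hx0 : ¬x ≤ 0 := not_le.2 (lt_of_le_of_lt (by positivity) hx)
    simp_all [D]

theorem convex_combination_le_one {p q u v : ℝ} (hp : 0 ≤ p) (hq : 0 ≤ q) (hpq : p + q = 1)
    (hu : u ≤ 1) (hv : v ≤ 1) : p * u + q * v ≤ 1 := by
  nlinarith

theorem D_le_one (n : ℕ) (x : ℝ) : D n x ≤ 1 := by
  induction n generalizing x with
  | zero => unfold D; split_ifs <;> norm_num
  | succ n ih =>
    have hα0 := Int.fract_nonneg x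
    have hα1 := Int.fract_lt_one x
    unfold D
    split_ifs with _ _ _ hodd
    · exact le_rfl
    · exact zero_le_one
    · exact convex_combination_le_one (by norm_num) (by norm_num) (by norm_num) (ih _) (ih _)
    · exact convex_combination_le_one (by linarith [hodd.2]) (by linarith) (by ring) (ih _) (ih _)
    · exact convex_combination_le_one (by positivity) (by positivity) (by field_simp) (ih _) (ih _)
    · exact convex_combination_le_one (div_nonneg (by linarith) (by linarith))
        (div_nonneg zero_le_one (by linarith))
        (by rw [← add_div, div_eq_one_iff_eq (by linarith)]; ring) (ih _) (ih _)

theorem D_succ_natCast {n k : ℕ} (hk : 0 < k) :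
    D (n + 1) k = 1 / 2 * D n (k - 1) + 1 / 2 * D n (k + 1) := by
  have hk' : (1 : ℝ) ≤ k := by exact_mod_cast hk
  by_cases hkn : (n : ℝ) + 1 < k
  · rw [D_of_lt (by push_cast; linarith), D_of_lt (by linarith), D_of_lt (by linarith)]
    ring
  · rw [D, if_neg (by linarith), if_neg hkn, if_pos ⟨k, by simp⟩]

theorem D_succ_natCast_add {n k : ℕ} {a : ℝ} (ha0 : 0 < a) (ha1 : a < 1) (h : Even (k + n)) :
    D (n + 1) (k + a) = 1 / (1 + a) * D n k + a / (1 + a) * D n (k + a + 1) := by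
  have hfloor : ⌊(k : ℝ) + a⌋ = k := by
    rw [Int.floor_eq_iff]; push_cast; constructor <;> linarith
  have hfract : Int.fract ((k : ℝ) + a) = a := by
    rw [Int.fract, hfloor]; push_cast; ring
  by_cases hkn : (n : ℝ) + 1 < k + a
  · have hnk : n < k := by
      by_contra! hkn'
      have : (k : ℝ) ≤ n := by exact_mod_cast hkn'
      linarith
    have hnk' : (n : ℝ) < k := by exact_mod_cast hnk
    rw [D_of_lt (by push_cast; linarith), D_of_lt hnk', D_of_lt (by linarith)]
    ring
  · have hnot_int : ¬∃ m : ℤ, (k : ℝ) + a = m := by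
      rintro ⟨m, hm⟩
      rw [hm, Int.fract_intCast] at hfract
      linarith
    have hnot_odd : ¬(Odd n ∧ (k : ℝ) + a < 1) := by
      rintro ⟨hodd, hlt⟩
      have hk : k = 0 := by
        by_contra hk
        have : (1 : ℝ) ≤ k := by exact_mod_cast Nat.one_le_iff_ne_zero.2 hk
        linarith
      subst hk
      exact Nat.not_even_iff_odd.2 hodd (by simpa using h)
    have hpar : Even (⌊(k : ℝ) + a⌋ + (n : ℤ)) := by
      rw [hfloor]; exact_mod_cast h
    rw [D, if_neg (not_le.2 (by positivity)), if_neg hkn, if_neg hnot_int, if_neg hnot_odd,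
      if_pos hpar, hfract, hfloor, Int.cast_natCast]

theorem recursion_step_le {a u v p q : ℝ} (ha : 0 < a)
    (h : (1 + a) / 2 * p + (1 - a) / 2 * q ≤ v) :
    (1 + a) / 2 * (1 / (1 + a) * u + a / (1 + a) * p)
      + (1 - a) / 2 * (1 / (1 + a) * v + a / (1 + a) * q) ≤ 1 / 2 * u + 1 / 2 * v := by
  have h1a : 1 + a ≠ 0 := by positivity
  have key : 1 / 2 * u + 1 / 2 * v - ((1 + a) / 2 * (1 / (1 + a) * u + a / (1 + a) * p)
      + (1 - a) / 2 * (1 / (1 + a) * v + a / (1 + a) * q))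
      = a / (1 + a) * (v - ((1 + a) / 2 * p + (1 - a) / 2 * q)) := by
    field_simp; ring
  linarith [mul_nonneg (by positivity : 0 ≤ a / (1 + a)) (sub_nonneg.2 h)]

theorem D_combination_le_zero (n : ℕ) {a : ℝ} (ha1 : a < 1) :
    (1 + a) / 2 * D n (a - 1) + (1 - a) / 2 * D n (a + 1) ≤ D n 0 := by
  rw [D_of_nonpos (by linarith), D_of_nonpos le_rfl]
  nlinarith [D_le_one n (a + 1)]

theorem D_combination_le_natCast (n k : ℕ) {a : ℝ} (ha0 : 0 < a) (ha1 : a < 1)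
    (h : Even (k + n)) :
    (1 + a) / 2 * D n (k + a - 1) + (1 - a) / 2 * D n (k + a + 1) ≤ D n k := by
  induction n generalizing k with
  | zero =>
    rcases Nat.eq_zero_or_pos k with rfl | hk
    · simpa using D_combination_le_zero 0 ha1
    · have hk' : (1 : ℝ) ≤ k := by exact_mod_cast hk
      rw [D_of_lt (by push_cast; linarith), D_of_lt (by push_cast; linarith),
        D_of_lt (by push_cast; linarith)]
      simp
  | succ m ih =>
    rcases k with _ | j
    · simpa using D_combination_le_zero (m + 1) ha1
    have h_left : ((j + 1 : ℕ) : ℝ) + a - 1 = j + a := by push_cast; ring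
    have h_right : ((j + 1 : ℕ) : ℝ) + a + 1 = (j + 2 : ℕ) + a := by push_cast; ring
    have h_shift : ((j + 2 : ℕ) : ℝ) + a - 1 = j + a + 1 := by push_cast; ring
    have h_pred : ((j + 1 : ℕ) : ℝ) - 1 = j := by push_cast; ring
    have h_succ : ((j + 1 : ℕ) : ℝ) + 1 = (j + 2 : ℕ) := by push_cast; ring
    have hpar : Even (j + m) := by
      rw [show j + 1 + (m + 1) = j + m + 2 by ring] at h
      exact (Nat.even_add.1 h).2 even_two
    have hpar' : Even (j + 2 + m) := by convert h using 1; ring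
    have ih' := ih (j + 2) hpar'
    rw [h_shift] at ih'
    rw [h_left, h_right, D_succ_natCast (Nat.succ_pos j), h_pred, h_succ,
      D_succ_natCast_add ha0 ha1 hpar, D_succ_natCast_add ha0 ha1 hpar']
    exact recursion_step_le ha0 ih'

/-- part (b) of Lemma 3.3. -/
theorem D_ineq_b (n : ℕ) (x : ℝ) (hx0 : 0 < x) (hint : ¬∃ m : ℤ, x = (m : ℝ))
    (heven : Even (⌊x⌋ + (n : ℤ))) :
    (1 / (1 + Int.fract x)) * D n (⌊x⌋ : ℝ) + (Int.fract x / (1 + Int.fract x)) * D n (x + 1)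
      - (1 / 2) * D n (x - 1) - (1 / 2) * D n (x + 1) ≥ 0 := by
  have ha0 : 0 < Int.fract x := by
    refine (Int.fract_nonneg x).lt_of_ne fun h => ?_
    obtain ⟨m, hm⟩ := Int.fract_eq_zero_iff.1 h.symm
    exact hint ⟨m, hm.symm⟩
  obtain ⟨k, hk⟩ := Int.eq_ofNat_of_zero_le (Int.floor_nonneg.2 hx0.le)
  have hx : x = k + Int.fract x := by
    simpa [hk] using (Int.floor_add_fract x).symm
  have key := D_combination_le_natCast n k ha0 (Int.fract_lt_one x)
    (by rw [hk] at heven; exact_mod_cast heven)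
  rw [← hx] at key
  rw [hk, Int.cast_natCast]
  set a := Int.fract x
  have h1a : 1 + a ≠ 0 := by positivity
  have identity : 1 / (1 + a) * D n k + a / (1 + a) * D n (x + 1)
      - 1 / 2 * D n (x - 1) - 1 / 2 * D n (x + 1)
      = 1 / (1 + a) * (D n k - ((1 + a) / 2 * D n (x - 1) + (1 - a) / 2 * D n (x + 1))) := by
    field_simp; ring
  rw [ge_iff_le, identity]
  exact mul_nonneg (by positivity) (sub_nonneg.2 key)
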